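/- arXiv:1303.2887 — 2 statements merged into one kernel-verified Lean document; each statement's English description precedes it below -/
import Mathlib

section
/- Let s_k/t_k be the convergents of an irrational number x with continued fraction expansion [a_0,a_1,a_2,...], where all a_k for k ≥ 1 are positive integers. Suppose t_k and t_{k+1} are both odd. Then (s_k/t_k) = (s_{k+1}/t_{k+1}) unless either (t_k ≡ 1 mod 4, t_{k+1} ≡ 3 mod 4, and k is odd) or (t_k ≡ 3 mod 4, t_{k+1} ≡ 1 mod 4, and k is even), in which two cases (s_k/t_k) = -(s_{k+1}/t_{k+1}). -/
/-!
The determinant identity `s_{k+1} t_k - s_k t_{k+1} = ε` with `ε = (-1)^k` gives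
`s_k t_{k+1} ≡ -ε (mod t_k)` and `s_{k+1} t_k ≡ ε (mod t_{k+1})`. Multiplying the two symbols,
`(s_k/t_k)(s_{k+1}/t_{k+1})` is `(-ε/t_k)(ε/t_{k+1})` times the reciprocity sign
`(t_{k+1}/t_k)(t_k/t_{k+1})`; both factors are read off from `t_k, t_{k+1} mod 4` using
`(-1/t) = χ₄(t)` and quadratic reciprocity. For odd `k` the negated identity has the same
shape with `(s_k, t_k)` and `(s_{k+1}, t_{k+1})` interchanged.
-/

/-- Numerators of continued fraction convergents: `cfS a k = s_k`
(with `s_{-1} = 1`, `s_0 = a_0`, `s_k = a_k s_{k-1} + s_{k-2}`). -/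
def cfS (a : ℕ → ℤ) : ℕ → ℤ
  | 0 => a 0
  | 1 => a 1 * a 0 + 1
  | (k+2) => a (k+2) * cfS a (k+1) + cfS a k

/-- Denominators of continued fraction convergents: `cfT a k = t_k`
(with `t_{-1} = 0`, `t_0 = 1`, `t_k = a_k t_{k-1} + t_{k-2}`). -/
def cfT (a : ℕ → ℤ) : ℕ → ℤ
  | 0 => 1
  | 1 => a 1
  | (k+2) => a (k+2) * cfT a (k+1) + cfT a k

open scoped NumberTheorySymbols

theorem jacobiSym_mul_jacobiSym_symm {m n : ℕ} (hm : Odd m) (hn : Odd n) (hmn : m.Coprime n) :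
    J(n | m) * J(m | n) = if m % 4 = 3 ∧ n % 4 = 3 then -1 else 1 := by
  have hsq : J(n | m) ^ 2 = 1 := jacobiSym.sq_one (by simpa using hmn.symm)
  rw [← jacobiSym.quadratic_reciprocity_if (Nat.odd_iff.mp hm) (Nat.odd_iff.mp hn)]
  split_ifs
  · linear_combination -hsq
  · linear_combination hsq

theorem jacobiSym_mul_jacobiSym_of_mul_sub_mul_eq_one {m n : ℕ} (hm : Odd m) (hn : Odd n)
    {s s' : ℤ} (h : s' * m - s * n = 1) :
    J(s | m) * J(s' | n) = if m % 4 = 3 ∧ n % 4 = 1 then -1 else 1 := by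
  have hmn : m.Coprime n := Nat.isCoprime_iff_coprime.mp ⟨s', -s, by linear_combination h⟩
  have hsm : J(s | m) * J(n | m) = ZMod.χ₄ m := by
    rw [← jacobiSym.mul_left, ← jacobiSym.at_neg_one hm]
    exact jacobiSym.mod_left' (Int.modEq_iff_dvd.mpr ⟨-s', by linear_combination h⟩)
  have hsn : J(s' | n) * J(m | n) = 1 := by
    rw [← jacobiSym.mul_left, ← jacobiSym.one_left n]
    exact jacobiSym.mod_left' (Int.modEq_iff_dvd.mpr ⟨-s, by linear_combination -h⟩)
  have hr := jacobiSym_mul_jacobiSym_symm hm hn hmn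
  have hr_sq : (J(n | m) * J(m | n)) ^ 2 = 1 := by
    rw [hr]; split_ifs <;> norm_num
  calc J(s | m) * J(s' | n)
      = (J(s | m) * J(n | m)) * (J(s' | n) * J(m | n)) * (J(n | m) * J(m | n)) := by
        linear_combination (-J(s | m) * J(s' | n)) * hr_sq
    _ = ZMod.χ₄ m * (J(n | m) * J(m | n)) := by rw [hsm, hsn, mul_one]
    _ = if m % 4 = 3 ∧ n % 4 = 1 then -1 else 1 := by
      rw [hr, ZMod.χ₄_nat_mod_four]
      rcases Nat.odd_mod_four_iff.mp (Nat.odd_iff.mp hm) with hm4 | hm4 <;>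
        rcases Nat.odd_mod_four_iff.mp (Nat.odd_iff.mp hn) with hn4 | hn4 <;>
        simp [hm4, hn4]

theorem cfT_pos (a : ℕ → ℤ) (ha : ∀ i, 1 ≤ i → 0 < a i) : ∀ k, 0 < cfT a k
  | 0 => by simp [cfT]
  | 1 => ha 1 le_rfl
  | k + 2 => by
    have := cfT_pos a ha (k + 1)
    have := cfT_pos a ha k
    have := ha (k + 2) (by omega)
    show 0 < a (k + 2) * cfT a (k + 1) + cfT a k
    positivity

theorem cfS_succ_mul_cfT_sub_cfS_mul_cfT_succ (a : ℕ → ℤ) :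
    ∀ k, cfS a (k + 1) * cfT a k - cfS a k * cfT a (k + 1) = (-1) ^ k
  | 0 => by simp only [cfS, cfT]; ring
  | k + 1 => by
    have ih := cfS_succ_mul_cfT_sub_cfS_mul_cfT_succ a k
    show (a (k + 2) * cfS a (k + 1) + cfS a k) * cfT a (k + 1)
        - cfS a (k + 1) * (a (k + 2) * cfT a (k + 1) + cfT a k) = (-1) ^ (k + 1)
    linear_combination -ih

theorem isCoprime_cfS_cfT (a : ℕ → ℤ) (k : ℕ) : IsCoprime (cfS a k) (cfT a k) :=
  ⟨-((-1) ^ k * cfT a (k + 1)), (-1) ^ k * cfS a (k + 1), by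
    have hsq : ((-1 : ℤ) ^ k) ^ 2 = 1 := by rw [← pow_mul]; exact Even.neg_one_pow ⟨k, by ring⟩
    linear_combination (-1) ^ k * cfS_succ_mul_cfT_sub_cfS_mul_cfT_succ a k + hsq⟩

theorem jacobiSym_cfS_mul_jacobiSym_cfS_succ (a : ℕ → ℤ) (ha : ∀ i, 1 ≤ i → 0 < a i) (k : ℕ)
    (hk : Odd (cfT a k)) (hk1 : Odd (cfT a (k + 1))) :
    J(cfS a k | (cfT a k).natAbs) * J(cfS a (k + 1) | (cfT a (k + 1)).natAbs) =
      if (cfT a k ≡ 1 [ZMOD 4] ∧ cfT a (k + 1) ≡ 3 [ZMOD 4] ∧ Odd k) ∨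
          (cfT a k ≡ 3 [ZMOD 4] ∧ cfT a (k + 1) ≡ 1 [ZMOD 4] ∧ Even k) then -1 else 1 := by
  obtain ⟨m, hm⟩ := Int.eq_ofNat_of_zero_le (cfT_pos a ha k).le
  obtain ⟨n, hn⟩ := Int.eq_ofNat_of_zero_le (cfT_pos a ha (k + 1)).le
  have hm_odd : Odd m := by rwa [hm, Int.odd_coe_nat] at hk
  have hn_odd : Odd n := by rwa [hn, Int.odd_coe_nat] at hk1
  have hdet := cfS_succ_mul_cfT_sub_cfS_mul_cfT_succ a k
  rw [hm, hn] at hdet ⊢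
  simp only [Int.natAbs_natCast, Int.ModEq]
  rcases Nat.even_or_odd k with hke | hko
  · rw [hke.neg_one_pow] at hdet
    rw [jacobiSym_mul_jacobiSym_of_mul_sub_mul_eq_one hm_odd hn_odd hdet]
    simp only [hke, Nat.not_odd_iff_even.mpr hke, and_false, and_true, false_or]
    exact if_congr (by omega) rfl rfl
  · rw [hko.neg_one_pow] at hdet
    rw [mul_comm, jacobiSym_mul_jacobiSym_of_mul_sub_mul_eq_one hn_odd hm_odd
      (by linear_combination -hdet)]
    simp only [hko, Nat.not_even_iff_odd.mpr hko, and_false, and_true, or_false]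
    exact if_congr (by omega) rfl rfl

theorem jacobi_sign_change_criterion
    (a : ℕ → ℤ) (ha : ∀ i, 1 ≤ i → 0 < a i) (k : ℕ)
    (hk : Odd (cfT a k)) (hk1 : Odd (cfT a (k+1))) :
    (((cfT a k ≡ 1 [ZMOD 4] ∧ cfT a (k+1) ≡ 3 [ZMOD 4] ∧ Odd k) ∨
      (cfT a k ≡ 3 [ZMOD 4] ∧ cfT a (k+1) ≡ 1 [ZMOD 4] ∧ Even k)) →
      jacobiSym (cfS a k) (cfT a k).natAbs
        = -jacobiSym (cfS a (k+1)) (cfT a (k+1)).natAbs) ∧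
    (¬((cfT a k ≡ 1 [ZMOD 4] ∧ cfT a (k+1) ≡ 3 [ZMOD 4] ∧ Odd k) ∨
       (cfT a k ≡ 3 [ZMOD 4] ∧ cfT a (k+1) ≡ 1 [ZMOD 4] ∧ Even k)) →
      jacobiSym (cfS a k) (cfT a k).natAbs
        = jacobiSym (cfS a (k+1)) (cfT a (k+1)).natAbs) := by
  have hprod := jacobiSym_cfS_mul_jacobiSym_cfS_succ a ha k hk hk1
  set x := J(cfS a k | (cfT a k).natAbs)
  set y := J(cfS a (k + 1) | (cfT a (k + 1)).natAbs)
  have hy : y ^ 2 = 1 := jacobiSym.sq_one <| by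
    simpa [Int.gcd_def, Int.natAbs_abs] using Int.isCoprime_iff_gcd_eq_one.mp (isCoprime_cfS_cfT a (k + 1))
  refine ⟨fun hsign => ?_, fun hsign => ?_⟩
  · rw [if_pos hsign] at hprod
    linear_combination (-x) * hy + y * hprod
  · rw [if_neg hsign] at hprod
    linear_combination (-x) * hy + y * hprod
end

section
/- Let L ≥ 3 and define a_k = 1 if k ≡ 0 or 1 (mod L), a_k = 3 if k ≡ -1 (mod L), and a_k = 4 otherwise. Then the denominators t_k of the convergents of [a_0,a_1,...] satisfy t_k ≡ 0 (mod 4) if k ≡ -1 (mod L), and t_k ≡ 1 (mod 4) otherwise. -/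
theorem cfT_add_two (a : ℕ → ℤ) (k : ℕ) :
    cfT a (k + 2) = a (k + 2) * cfT a (k + 1) + cfT a k :=
  rfl

theorem Nat.add_one_mod_eq_ite {L : ℕ} (hL : 1 < L) (k : ℕ) :
    (k + 1) % L = if k % L = L - 1 then 0 else k % L + 1 := by
  have := Nat.mod_lt k (by omega : 0 < L)
  rw [Nat.add_mod_eq_ite, Nat.mod_eq_of_lt hL]
  split_ifs <;> omega

structure IsStarConstruction (L : ℕ) (a : ℕ → ℤ) : Prop where
  eq_one : ∀ k, (k % L = 0 ∨ k % L = 1) → a k = 1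
  eq_three : ∀ k, k % L = L - 1 → a k = 3
  eq_four : ∀ k, ¬(k % L = 0 ∨ k % L = 1) → k % L ≠ L - 1 → a k = 4

def starResidue (L k : ℕ) : ℤ :=
  if k % L = L - 1 then 0 else 1

theorem starResidue_of_eq {L k : ℕ} (h : k % L = L - 1) : starResidue L k = 0 :=
  if_pos h

theorem starResidue_of_ne {L k : ℕ} (h : k % L ≠ L - 1) : starResidue L k = 1 :=
  if_neg h

namespace IsStarConstruction

variable {L : ℕ} {a : ℕ → ℤ}

theorem cfT_emod_four_add_two (hL : 3 ≤ L) (ha : IsStarConstruction L a) (k : ℕ)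
    (h₀ : cfT a k % 4 = starResidue L k) (h₁ : cfT a (k + 1) % 4 = starResidue L (k + 1)) :
    cfT a (k + 2) % 4 = starResidue L (k + 2) := by
  have hL₁ : 1 < L := by omega
  have hk := Nat.mod_lt k (by omega : 0 < L)
  rw [cfT_add_two]
  obtain hr | hr | hr : k % L = L - 1 ∨ k % L = L - 2 ∨ k % L + 3 ≤ L := by omega
  · have e₁ : (k + 1) % L = 0 := by rw [Nat.add_one_mod_eq_ite hL₁, if_pos hr]
    have e₂ : (k + 2) % L = 1 :=
      (Nat.add_one_mod_eq_ite hL₁ (k + 1)).trans (by rw [e₁, if_neg (by omega)])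
    rw [starResidue_of_eq hr] at h₀
    rw [starResidue_of_ne (by omega)] at h₁
    rw [starResidue_of_ne (by omega), ha.eq_one _ (.inr e₂)]
    omega
  · have e₁ : (k + 1) % L = L - 1 := by
      rw [Nat.add_one_mod_eq_ite hL₁, if_neg (by omega)]
      omega
    have e₂ : (k + 2) % L = 0 :=
      (Nat.add_one_mod_eq_ite hL₁ (k + 1)).trans (by rw [e₁, if_pos rfl])
    rw [starResidue_of_ne (by omega)] at h₀
    rw [starResidue_of_eq e₁] at h₁
    rw [starResidue_of_ne (by omega), ha.eq_one _ (.inl e₂)]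
    omega
  · have e₁ : (k + 1) % L = k % L + 1 := by
      rw [Nat.add_one_mod_eq_ite hL₁, if_neg (by omega)]
    have e₂ : (k + 2) % L = k % L + 2 :=
      (Nat.add_one_mod_eq_ite hL₁ (k + 1)).trans (by rw [e₁, if_neg (by omega)])
    rw [starResidue_of_ne (by omega)] at h₀
    rw [starResidue_of_ne (by omega)] at h₁
    by_cases hlast : (k + 2) % L = L - 1
    · rw [starResidue_of_eq hlast, ha.eq_three _ hlast]
      omega
    · rw [starResidue_of_ne hlast, ha.eq_four _ (by omega) hlast]
      omega

theorem cfT_emod_four (hL : 3 ≤ L) (ha : IsStarConstruction L a) (k : ℕ) :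
    cfT a k % 4 = starResidue L k := by
  induction k using Nat.twoStepInduction with
  | zero =>
    rw [starResidue_of_ne (by rw [Nat.zero_mod]; omega)]
    rfl
  | one =>
    have h₁ : 1 % L = 1 := Nat.mod_eq_of_lt (by omega)
    rw [starResidue_of_ne (by omega)]
    show a 1 % 4 = 1
    rw [ha.eq_one 1 (.inr h₁)]
    rfl
  | more k h₀ h₁ => exact ha.cfT_emod_four_add_two hL k h₀ h₁

end IsStarConstruction

theorem denominators_mod_four_star_construction
    (L : ℕ) (hL : 3 ≤ L)
    (a : ℕ → ℤ)
    (ha1 : ∀ k, (k % L = 0 ∨ k % L = 1) → a k = 1)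
    (ha3 : ∀ k, k % L = L - 1 → a k = 3)
    (ha4 : ∀ k, ¬(k % L = 0 ∨ k % L = 1) → k % L ≠ L - 1 → a k = 4) :
    ∀ k, (k % L = L - 1 → cfT a k ≡ 0 [ZMOD 4]) ∧
      (k % L ≠ L - 1 → cfT a k ≡ 1 [ZMOD 4]) := by
  intro k
  have h := IsStarConstruction.cfT_emod_four hL ⟨ha1, ha3, ha4⟩ k
  refine ⟨fun hk => ?_, fun hk => ?_⟩
  · rw [starResidue_of_eq hk] at h
    exact h
  · rw [starResidue_of_ne hk] at h
    exact h
end
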